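/- Let n ≥ 1, let k : Fin n → ℂ, and let A_k be the multiplication operator on EuclideanSpace ℂ (Fin n) defined by (A_k x) p = (k p) · (x p). Let Ω = {p : Fin n | ‖1 - k p‖ < 1} and let P be the coordinate projection (P x) p = x p if p ∈ Ω and (P x) p = 0 otherwise. Let i* ∈ EuclideanSpace ℂ (Fin n), J* = A_k(i*), and let (Xⁿ) be the reverse-filtering iteration X⁰ = J*, X^{n+1} = Xⁿ + J* - A_k(Xⁿ). Then (i) the projected sequence satisfies the same recursion: P(X^{n+1}) = P(Xⁿ) + P(J*) - A_k(P(Xⁿ)) for all n, and (ii) the projected sequence converges to the projected true input: P(Xⁿ) → P(i*). (The fixed-point iteration splits into independent subsequences on Ω and its complement, and the Ω-component converges to the unique solution.) -/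

import Mathlib

/-!
Everything is coordinatewise. In coordinate `p` the error `i* - Xᵐ` is multiplied by `1 - k p`
at each step, so `Xᵐ p = (1 - (1 - k p) ^ (m + 1)) i* p`, which tends to `i* p` when
`‖1 - k p‖ < 1`. The projection onto `Ω` is linear and commutes with the multiplier, so it maps
the recursion to itself.
-/

/-- The multiplication (Fourier-multiplier) operator with multiplier `k`. -/
def mulOp (n : ℕ) (k : Fin n → ℂ) (x : EuclideanSpace ℂ (Fin n)) :
    EuclideanSpace ℂ (Fin n) :=
  WithLp.toLp 2 (fun p => k p * x p)

/-- The coordinate projection onto `Ω = {p | ‖1 - k p‖ < 1}`. -/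
noncomputable def projOmega (n : ℕ) (k : Fin n → ℂ) (x : EuclideanSpace ℂ (Fin n)) :
    EuclideanSpace ℂ (Fin n) :=
  WithLp.toLp 2 (fun p => if ‖(1 : ℂ) - k p‖ < 1 then x p else 0)

open Filter Topology

theorem reverseFilter_eq_one_sub_pow_mul {R : Type*} [CommRing R] {k a : R} {x : ℕ → R}
    (h0 : x 0 = k * a) (hsucc : ∀ m, x (m + 1) = x m + k * a - k * x m) (m : ℕ) :
    x m = (1 - (1 - k) ^ (m + 1)) * a := by
  induction m with
  | zero => rw [h0]; ring
  | succ m ih => rw [hsucc, ih]; ring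

theorem tendsto_one_sub_pow_succ_mul {𝕜 : Type*} [NormedField 𝕜] {r : 𝕜} (hr : ‖r‖ < 1)
    (a : 𝕜) : Tendsto (fun m : ℕ => (1 - r ^ (m + 1)) * a) atTop (𝓝 a) := by
  have hpow : Tendsto (fun m : ℕ => r ^ (m + 1)) atTop (𝓝 0) :=
    (tendsto_pow_atTop_nhds_zero_of_norm_lt_one hr).comp (tendsto_add_atTop_nat 1)
  simpa using ((tendsto_const_nhds (x := (1 : 𝕜))).sub hpow).mul (tendsto_const_nhds (x := a))

section Coordinates

variable {n : ℕ} {k : Fin n → ℂ}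

@[simp]
theorem mulOp_apply (x : EuclideanSpace ℂ (Fin n)) (p : Fin n) : mulOp n k x p = k p * x p :=
  rfl

@[simp]
theorem projOmega_apply (x : EuclideanSpace ℂ (Fin n)) (p : Fin n) :
    projOmega n k x p = if ‖(1 : ℂ) - k p‖ < 1 then x p else 0 :=
  rfl

theorem projOmega_add (x y : EuclideanSpace ℂ (Fin n)) :
    projOmega n k (x + y) = projOmega n k x + projOmega n k y := by
  ext p
  simp only [projOmega_apply, PiLp.add_apply]
  split_ifs <;> simp

theorem projOmega_sub (x y : EuclideanSpace ℂ (Fin n)) :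
    projOmega n k (x - y) = projOmega n k x - projOmega n k y := by
  ext p
  simp only [projOmega_apply, PiLp.sub_apply]
  split_ifs <;> simp

theorem projOmega_mulOp (x : EuclideanSpace ℂ (Fin n)) :
    projOmega n k (mulOp n k x) = mulOp n k (projOmega n k x) := by
  ext p
  simp only [projOmega_apply, mulOp_apply]
  split_ifs <;> simp

theorem tendsto_projOmega {X : ℕ → EuclideanSpace ℂ (Fin n)} {a : EuclideanSpace ℂ (Fin n)}
    (hX : ∀ p, ‖(1 : ℂ) - k p‖ < 1 → Tendsto (fun m => X m p) atTop (𝓝 (a p))) :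
    Tendsto (fun m => projOmega n k (X m)) atTop (𝓝 (projOmega n k a)) := by
  refine (PiLp.continuous_toLp 2 _).tendsto _ |>.comp (tendsto_pi_nhds.2 fun p => ?_)
  by_cases hp : ‖(1 : ℂ) - k p‖ < 1
  · simpa only [hp, if_true] using hX p hp
  · simpa only [hp, if_false] using tendsto_const_nhds

end Coordinates

theorem multiplier_operator_projected_iteration_general
    (n : ℕ) (k : Fin n → ℂ)
    (istar Jstar : EuclideanSpace ℂ (Fin n)) (hJ : Jstar = mulOp n k istar)
    (X : ℕ → EuclideanSpace ℂ (Fin n)) (hX0 : X 0 = Jstar)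
    (hX : ∀ m : ℕ, X (m + 1) = X m + Jstar - mulOp n k (X m)) :
    (∀ m : ℕ, projOmega n k (X (m + 1)) =
        projOmega n k (X m) + projOmega n k Jstar - mulOp n k (projOmega n k (X m))) ∧
      Filter.Tendsto (fun m => projOmega n k (X m)) Filter.atTop
        (nhds (projOmega n k istar)) := by
  refine ⟨fun m => by rw [hX, projOmega_sub, projOmega_add, projOmega_mulOp], ?_⟩
  refine tendsto_projOmega fun p hp => ?_
  have closed_form : ∀ m, X m p = (1 - (1 - k p) ^ (m + 1)) * istar p :=
    reverseFilter_eq_one_sub_pow_mul (x := fun m => X m p) (by simp [hX0, hJ])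
      (fun m => by simp [hX, hJ])
  simpa only [closed_form] using tendsto_one_sub_pow_succ_mul hp (istar p)

/-- The reverse-filtering iteration splits: the `Ω`-projected sequence obeys
the same recursion and converges to the projection of the true input. -/
theorem multiplier_operator_projected_iteration
    (n : ℕ) (hn : 0 < n) (k : Fin n → ℂ)
    (istar Jstar : EuclideanSpace ℂ (Fin n)) (hJ : Jstar = mulOp n k istar)
    (X : ℕ → EuclideanSpace ℂ (Fin n)) (hX0 : X 0 = Jstar)
    (hX : ∀ m : ℕ, X (m + 1) = X m + Jstar - mulOp n k (X m)) :
    (∀ m : ℕ, projOmega n k (X (m + 1)) =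
        projOmega n k (X m) + projOmega n k Jstar - mulOp n k (projOmega n k (X m))) ∧
      Filter.Tendsto (fun m => projOmega n k (X m)) Filter.atTop
        (nhds (projOmega n k istar)) :=
  multiplier_operator_projected_iteration_general n k istar Jstar hJ X hX0 hX
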